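/- arXiv:math/0411199 — 5 statements merged into one kernel-verified Lean document; each statement's English description precedes it below -/
import Mathlib

section
/- For the complete graph on j ≥ 1 vertices, the sum over all edge subsets A' of (-1)^{|A'|} x^{κ(A')}, where κ(A') is the number of connected components of the graph (V_j, A'), equals the falling factorial x(x-1)(x-2)⋯(x-j+1). -/
open Finset

/-- The number of connected components of the spanning subgraph of the complete
graph on `Fin n` with edge set `A` (isolated vertices count as components). -/
noncomputable def kappa {n : ℕ} (A : Finset (Sym2 (Fin n))) : ℕ :=
  Nat.card (SimpleGraph.fromEdgeSet (A : Set (Sym2 (Fin n)))).ConnectedComponent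

lemma walk_const {j n : ℕ} (A : Finset (Sym2 (Fin j))) (f : Fin j → Fin n)
    (hf : ∀ a b : Fin j, s(a, b) ∈ A → f a = f b) :
    ∀ {v w : Fin j}, (SimpleGraph.fromEdgeSet (A : Set (Sym2 (Fin j)))).Walk v w → f v = f w := by
  intro v w p
  induction p with
  | nil => rfl
  | cons h p ih =>
      rw [SimpleGraph.fromEdgeSet_adj] at h
      exact (hf _ _ (Finset.mem_coe.mp h.1)).trans ih

lemma card_cond {j n : ℕ} (A : Finset (Sym2 (Fin j))) :
    Nat.card {f : Fin j → Fin n // ∀ a b : Fin j, s(a, b) ∈ A → f a = f b} = n ^ kappa A := by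
  have e : {f : Fin j → Fin n // ∀ a b : Fin j, s(a, b) ∈ A → f a = f b} ≃
      ((SimpleGraph.fromEdgeSet (A : Set (Sym2 (Fin j)))).ConnectedComponent → Fin n) :=
    { toFun := fun f => SimpleGraph.ConnectedComponent.lift f.1
        (fun v w p _ => walk_const A f.1 f.2 p)
      invFun := fun g => ⟨fun v =>
          g ((SimpleGraph.fromEdgeSet (A : Set (Sym2 (Fin j)))).connectedComponentMk v),
        fun a b hab => by
          by_cases h : a = b
          · subst h; rfl
          · exact congrArg g (SimpleGraph.ConnectedComponent.sound
              (SimpleGraph.Adj.reachable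
                ((SimpleGraph.fromEdgeSet_adj _).mpr ⟨Finset.mem_coe.mpr hab, h⟩)))⟩
      left_inv := fun f => Subtype.ext (funext fun v => rfl)
      right_inv := fun g => funext fun c => c.ind (fun v => rfl) }
  rw [Nat.card_congr e, Nat.card_fun, Nat.card_eq_fintype_card, Fintype.card_fin]
  rfl

lemma key (j n : ℕ) :
    ∑ A' ∈ ((⊤ : SimpleGraph (Fin j)).edgeFinset).powerset,
      (-1 : ℝ) ^ A'.card * (n : ℝ) ^ kappa A' = (n.descFactorial j : ℝ) := by
  classical
  set E := ((⊤ : SimpleGraph (Fin j)).edgeFinset) with hE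
  set M : (Fin j → Fin n) → Finset (Sym2 (Fin j)) :=
    fun f => E.filter (fun e => ∀ a b : Fin j, e = s(a, b) → f a = f b) with hM
  have hMempty : ∀ f : Fin j → Fin n, M f = ∅ ↔ Function.Injective f := by
    intro f
    constructor
    · intro hme a b hfab
      by_contra hne
      have hmem : s(a, b) ∈ M f := by
        refine Finset.mem_filter.mpr ⟨?_, ?_⟩
        · simp [hE, hne]
        · intro c d hcd
          rcases Sym2.eq_iff.mp hcd with ⟨h1, h2⟩ | ⟨h1, h2⟩
          · rw [← h1, ← h2]; exact hfab
          · rw [← h1, ← h2]; exact hfab.symm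
      rw [hme] at hmem
      exact absurd hmem (Finset.notMem_empty _)
    · intro hinj
      rw [Finset.eq_empty_iff_forall_notMem]
      intro e
      induction e using Sym2.ind with
      | _ a b =>
        intro hmem
        rcases Finset.mem_filter.mp hmem with ⟨heE, hpred⟩
        have hab : a ≠ b := by simpa [hE] using heE
        exact hab (hinj (hpred a b rfl))
  have hcard : ∀ A : Finset (Sym2 (Fin j)),
      ((n : ℝ)) ^ kappa A =
      (((univ : Finset (Fin j → Fin n)).filter
        (fun f => ∀ a b : Fin j, s(a, b) ∈ A → f a = f b)).card : ℝ) := by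
    intro A
    have h : ((univ : Finset (Fin j → Fin n)).filter
        (fun f => ∀ a b : Fin j, s(a, b) ∈ A → f a = f b)).card = n ^ kappa A := by
      rw [← Fintype.card_subtype, ← Nat.card_eq_fintype_card, card_cond]
    rw [h]; push_cast; ring
  calc ∑ A' ∈ E.powerset, (-1 : ℝ) ^ A'.card * (n : ℝ) ^ kappa A'
      = ∑ A' ∈ E.powerset, ∑ f ∈ (univ : Finset (Fin j → Fin n)).filter
          (fun f => ∀ a b : Fin j, s(a, b) ∈ A' → f a = f b), (-1 : ℝ) ^ A'.card := by
        refine Finset.sum_congr rfl fun A _ => ?_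
        rw [hcard A, Finset.sum_const, nsmul_eq_mul]; ring
    _ = ∑ f ∈ (univ : Finset (Fin j → Fin n)),
          ∑ A' ∈ E.powerset.filter (fun A' => ∀ a b : Fin j, s(a, b) ∈ A' → f a = f b),
            (-1 : ℝ) ^ A'.card := by
        simp only [Finset.sum_filter]
        exact Finset.sum_comm
    _ = ∑ f ∈ (univ : Finset (Fin j → Fin n)),
          ∑ A' ∈ (M f).powerset, (-1 : ℝ) ^ A'.card := by
        refine Finset.sum_congr rfl fun f _ => ?_
        congr 1
        ext A
        simp only [Finset.mem_filter, Finset.mem_powerset, hM]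
        constructor
        · rintro ⟨hAE, hcond⟩ e he
          exact Finset.mem_filter.mpr ⟨hAE he, fun a b hab => hcond a b (hab ▸ he)⟩
        · intro h
          exact ⟨fun e he => (Finset.mem_filter.mp (h he)).1, fun a b hab =>
            (Finset.mem_filter.mp (h hab)).2 a b rfl⟩
    _ = ∑ f ∈ (univ : Finset (Fin j → Fin n)), if M f = ∅ then (1 : ℝ) else 0 := by
        refine Finset.sum_congr rfl fun f _ => ?_
        have h := Finset.sum_powerset_neg_one_pow_card (x := M f)
        calc ∑ A' ∈ (M f).powerset, (-1 : ℝ) ^ A'.card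
            = ((∑ A' ∈ (M f).powerset, (-1 : ℤ) ^ A'.card : ℤ) : ℝ) := by push_cast; rfl
          _ = _ := by rw [h]; split <;> norm_num
    _ = ∑ f ∈ (univ : Finset (Fin j → Fin n)),
          if Function.Injective f then (1 : ℝ) else 0 := by
        refine Finset.sum_congr rfl fun f _ => ?_
        simp [hMempty f]
    _ = (((univ : Finset (Fin j → Fin n)).filter (fun f => Function.Injective f)).card : ℝ) := by
        rw [Finset.sum_boole]
    _ = (n.descFactorial j : ℝ) := by
        have h1 : ((univ : Finset (Fin j → Fin n)).filter
            (fun f => Function.Injective f)).card = Fintype.card (Fin j ↪ Fin n) := by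
          rw [← Fintype.card_subtype]
          exact Fintype.card_congr (Equiv.subtypeInjectiveEquivEmbedding _ _)
        rw [h1, Fintype.card_embedding_eq]
        simp

theorem stmt0 (j : ℕ) (hj : 1 ≤ j) (x : ℝ) :
    ∑ A' ∈ ((⊤ : SimpleGraph (Fin j)).edgeFinset).powerset,
      (-1 : ℝ) ^ A'.card * x ^ kappa A' =
    ∏ i ∈ Finset.range j, (x - i) := by
  classical
  set E := ((⊤ : SimpleGraph (Fin j)).edgeFinset) with hE
  set P : Polynomial ℝ :=
    ∑ A ∈ E.powerset, Polynomial.C ((-1 : ℝ) ^ A.card) * Polynomial.X ^ kappa A with hP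
  set Q : Polynomial ℝ := ∏ i ∈ Finset.range j, (Polynomial.X - Polynomial.C (i : ℝ)) with hQ
  have hPeval : ∀ y : ℝ, P.eval y = ∑ A ∈ E.powerset, (-1 : ℝ) ^ A.card * y ^ kappa A := by
    intro y
    rw [hP, Polynomial.eval_finset_sum]
    simp
  have hQeval : ∀ y : ℝ, Q.eval y = ∏ i ∈ Finset.range j, (y - i) := by
    intro y
    rw [hQ, Polynomial.eval_prod]
    simp
  have hPQ : P = Q := by
    apply Polynomial.eq_of_infinite_eval_eq
    have hsub : Set.range (fun n : ℕ => ((n + j : ℕ) : ℝ)) ⊆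
        {y | P.eval y = Q.eval y} := by
      rintro _ ⟨n, rfl⟩
      simp only [Set.mem_setOf_eq]
      rw [hPeval, hQeval, key j (n + j), Nat.descFactorial_eq_prod_range, Nat.cast_prod]
      refine Finset.prod_congr rfl fun i hi => ?_
      rw [Nat.cast_sub (le_of_lt (lt_of_lt_of_le (Finset.mem_range.mp hi) (Nat.le_add_left j n)))]
    have hinj : Function.Injective (fun n : ℕ => ((n + j : ℕ) : ℝ)) := by
      intro a b h
      simpa using h
    exact (Set.infinite_range_of_injective hinj).mono hsub
  calc ∑ A' ∈ E.powerset, (-1 : ℝ) ^ A'.card * x ^ kappa A' = P.eval x := (hPeval x).symm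
    _ = Q.eval x := by rw [hPQ]
    _ = ∏ i ∈ Finset.range j, (x - i) := hQeval x
end

section
/- Let E be a finite set ('edges') with distinct positive appearance times t : E → ℝ, and let A_i denote the set of the i earliest edges (so A_0 = ∅). For any subset A ⊆ E with A ≠ E, the alternating sum Σ_{B ⊆ A} (-1)^{|A−B|} · min{t(e) : e ∉ B} equals t_{i+1} − t_i if A = A_i for some i (where t_0 = 0 and t_1 < t_2 < ⋯ are the sorted times), and equals 0 otherwise. -/
/-!
The minimum of `t` outside `B` telescopes as `∑ i, [A_i ⊆ B] (t_{i+1} - t_i)`: the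
indicator is `1` exactly for `i` below the rank of the earliest edge missing from `B`.
Substituting this into the alternating sum and exchanging the two sums leaves, for each
`i`, the Möbius function of the Boolean lattice,
`∑_{A_i ⊆ B ⊆ A} (-1)^{|A - B|} = [A = A_i]`, and since `|A_i| = i` only `i = |A|`
can contribute.
-/

open Finset

variable {E : Type*} [Fintype E] [DecidableEq E]

/-- The set of the `i` earliest edges: those `e` such that at most `i`
edges (including `e` itself) have appearance time `≤ t e`. -/
noncomputable def earliest (t : E → ℝ) (i : ℕ) : Finset E :=
  Finset.univ.filter fun e =>
    (Finset.univ.filter fun e' => t e' ≤ t e).card ≤ i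

/-- The sorted appearance times: `tval t 0 = 0` and `tval t (i+1)` is the
minimal time of an edge outside the set of the `i` earliest edges. -/
noncomputable def tval (t : E → ℝ) : ℕ → ℝ
  | 0 => 0
  | i + 1 => sInf (t '' {e | e ∉ earliest t i})

section Moebius

variable {α R : Type*} [DecidableEq α] [CommRing R]

lemma sum_powerset_neg_one_pow_card_eq_ite (s : Finset α) :
    ∑ u ∈ s.powerset, (-1 : R) ^ #u = if s = ∅ then 1 else 0 := by
  have h := congrArg (Int.cast : ℤ → R) (sum_powerset_neg_one_pow_card (x := s))
  push_cast at h
  simpa [apply_ite (Int.cast : ℤ → R)] using h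

lemma sum_powerset_ite_subset_neg_one_pow (s a : Finset α) :
    ∑ b ∈ a.powerset, (if s ⊆ b then (-1 : R) ^ (#a - #b) else 0) =
      if a = s then 1 else 0 := by
  rw [← sum_filter]
  by_cases hsa : s ⊆ a
  · have hcompl : ∑ b ∈ a.powerset with s ⊆ b, (-1 : R) ^ (#a - #b) =
        ∑ c ∈ (a \ s).powerset, (-1 : R) ^ #c := by
      refine sum_nbij' (a \ ·) (a \ ·) ?_ ?_ ?_ ?_ ?_
      · intro b hb
        simp only [mem_filter, mem_powerset] at hb
        simpa using sdiff_subset_sdiff subset_rfl hb.2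
      · intro c hc
        simp only [mem_powerset] at hc
        simp only [mem_filter, mem_powerset]
        exact ⟨sdiff_subset, subset_sdiff.2 ⟨hsa, disjoint_sdiff.mono_right hc⟩⟩
      · intro b hb
        simp only [mem_filter, mem_powerset] at hb
        exact Finset.sdiff_sdiff_eq_self hb.1
      · intro c hc
        simp only [mem_powerset] at hc
        exact Finset.sdiff_sdiff_eq_self (hc.trans sdiff_subset)
      · intro b hb
        simp only [mem_filter, mem_powerset] at hb
        rw [card_sdiff_of_subset hb.1]
    rw [hcompl, sum_powerset_neg_one_pow_card_eq_ite]
    simp only [sdiff_eq_empty_iff_subset]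
    exact if_congr ⟨fun h => h.antisymm hsa, fun h => h.le⟩ rfl rfl
  · rw [filter_false_of_mem fun b hb hsb => hsa (hsb.trans (mem_powerset.1 hb)), sum_empty,
      if_neg fun h => hsa h.ge]

end Moebius

noncomputable def timeRank (t : E → ℝ) (e : E) : ℕ :=
  #{e' | t e' ≤ t e}

section Rank

omit [DecidableEq E]

variable {t : E → ℝ}

lemma mem_earliest_iff {i : ℕ} {e : E} : e ∈ earliest t i ↔ timeRank t e ≤ i := by
  simp [earliest, timeRank]

lemma timeRank_lt_timeRank {e e' : E} (h : t e < t e') : timeRank t e < timeRank t e' := by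
  refine card_lt_card ((ssubset_iff_of_subset ?_).2 ⟨e', ?_, ?_⟩)
  · exact monotone_filter_right _ fun x _ hx => hx.trans h.le
  · simp
  · simpa using h

lemma timeRank_le_timeRank_iff {e e' : E} : timeRank t e ≤ timeRank t e' ↔ t e ≤ t e' :=
  ⟨fun h => not_lt.1 fun h' => (timeRank_lt_timeRank h').not_ge h,
    fun h => card_le_card (monotone_filter_right _ fun _ _ hx => hx.trans h)⟩

lemma timeRank_injective (ht : Function.Injective t) : Function.Injective (timeRank t) :=
  fun _ _ h =>
    ht ((timeRank_le_timeRank_iff.1 h.le).antisymm (timeRank_le_timeRank_iff.1 h.ge))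

lemma one_le_timeRank (e : E) : 1 ≤ timeRank t e :=
  card_pos.2 ⟨e, by simp⟩

lemma image_timeRank (ht : Function.Injective t) :
    univ.image (timeRank t) = Icc 1 (Fintype.card E) := by
  refine eq_of_subset_of_card_le (fun j hj => ?_) ?_
  · obtain ⟨e, -, rfl⟩ := mem_image.1 hj
    exact mem_Icc.2 ⟨one_le_timeRank e, card_le_univ _⟩
  · rw [Nat.card_Icc, card_image_of_injective _ (timeRank_injective ht), card_univ]
    omega

lemma card_earliest (ht : Function.Injective t) {i : ℕ} (hi : i ≤ Fintype.card E) :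
    #(earliest t i) = i := by
  have himage : (earliest t i).image (timeRank t) = Icc 1 i := by
    ext j
    constructor
    · intro hj
      obtain ⟨e, he, rfl⟩ := mem_image.1 hj
      exact mem_Icc.2 ⟨one_le_timeRank e, mem_earliest_iff.1 he⟩
    · intro hj
      obtain ⟨hj1, hji⟩ := mem_Icc.1 hj
      have : j ∈ univ.image (timeRank t) := by
        rw [image_timeRank ht]
        exact mem_Icc.2 ⟨hj1, hji.trans hi⟩
      obtain ⟨e, -, rfl⟩ := mem_image.1 this
      exact mem_image_of_mem _ (mem_earliest_iff.2 hji)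
  rw [← card_image_of_injective _ (timeRank_injective ht), himage, Nat.card_Icc]
  omega

lemma tval_timeRank (e : E) : tval t (timeRank t e) = t e := by
  obtain ⟨i, hi⟩ := Nat.exists_eq_add_of_le' (one_le_timeRank (t := t) e)
  rw [hi]
  refine IsLeast.csInf_eq ⟨⟨e, ?_, rfl⟩, ?_⟩
  · simp only [Set.mem_ofPred_eq, mem_earliest_iff]
    omega
  · rintro _ ⟨e', he', rfl⟩
    simp only [Set.mem_ofPred_eq, mem_earliest_iff] at he'
    exact timeRank_le_timeRank_iff.1 (by omega)

lemma earliest_subset_iff_lt_timeRank {B : Finset E} {e₀ : E} (he₀ : e₀ ∉ B)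
    (hmin : ∀ e ∉ B, t e₀ ≤ t e) (i : ℕ) : earliest t i ⊆ B ↔ i < timeRank t e₀ := by
  constructor
  · intro h
    by_contra! hi
    exact he₀ (h (mem_earliest_iff.2 hi))
  · intro hi e he
    by_contra heB
    have := timeRank_le_timeRank_iff.2 (hmin e heB)
    have := mem_earliest_iff.1 he
    omega

end Rank

lemma sInf_image_compl_eq_sum {t : E → ℝ} (B : Finset E) (hB : B ≠ univ) :
    sInf (t '' {e | e ∉ B}) = ∑ i ∈ range (Fintype.card E),
      if earliest t i ⊆ B then tval t (i + 1) - tval t i else 0 := by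
  obtain ⟨e₀, he₀, hmin⟩ :=
    exists_min_image Bᶜ t (nonempty_iff_ne_empty.2 ((compl_eq_empty_iff B).not.2 hB))
  rw [mem_compl] at he₀
  replace hmin : ∀ e ∉ B, t e₀ ≤ t e := fun e he => hmin e (mem_compl.2 he)
  have hrange :
      (range (Fintype.card E)).filter (earliest t · ⊆ B) = range (timeRank t e₀) := by
    ext i
    simp only [mem_filter, mem_range, earliest_subset_iff_lt_timeRank he₀ hmin]
    have : timeRank t e₀ ≤ Fintype.card E := card_le_univ _
    omega
  rw [← sum_filter, hrange, sum_range_sub (tval t), tval_timeRank, tval, sub_zero]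
  exact IsLeast.csInf_eq ⟨⟨e₀, he₀, rfl⟩, by rintro _ ⟨e, he, rfl⟩; exact hmin e he⟩

theorem stmt8_general (t : E → ℝ) (ht : Function.Injective t)
    (A : Finset E) (hA : A ≠ Finset.univ) :
    ∑ B ∈ A.powerset, (-1 : ℝ) ^ (A.card - B.card) * sInf (t '' {e | e ∉ B}) =
      if A = earliest t A.card then tval t (A.card + 1) - tval t A.card
      else 0 := by
  calc ∑ B ∈ A.powerset, (-1 : ℝ) ^ (#A - #B) * sInf (t '' {e | e ∉ B})
      = ∑ i ∈ range (Fintype.card E), ∑ B ∈ A.powerset,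
          (if earliest t i ⊆ B then (-1 : ℝ) ^ (#A - #B) else 0) *
            (tval t (i + 1) - tval t i) := by
        rw [sum_comm]
        refine sum_congr rfl fun B hB => ?_
        rw [sInf_image_compl_eq_sum B fun h => hA (univ_subset_iff.1 (h ▸ mem_powerset.1 hB)),
          mul_sum]
        simp only [mul_ite, ite_mul, mul_zero, zero_mul]
    _ = ∑ i ∈ range (Fintype.card E),
          if A = earliest t i then tval t (i + 1) - tval t i else 0 := by
        simp only [← sum_mul, sum_powerset_ite_subset_neg_one_pow, boole_mul]
    _ = _ := by
        refine sum_eq_single_of_mem #A (mem_range.2 ((card_lt_iff_ne_univ A).2 hA))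
          fun i hi hne => if_neg ?_
        rintro rfl
        exact hne (card_earliest ht (mem_range.1 hi).le).symm

theorem stmt8 [Nonempty E] (t : E → ℝ) (ht : Function.Injective t)
    (htpos : ∀ e, 0 < t e) (A : Finset E) (hA : A ≠ Finset.univ) :
    ∑ B ∈ A.powerset, (-1 : ℝ) ^ (A.card - B.card) * sInf (t '' {e | e ∉ B}) =
      if A = earliest t A.card then tval t (A.card + 1) - tval t A.card
      else 0 :=
  stmt8_general t ht A hA
end

section
/- Let E be a finite set with distinct positive times t : E → ℝ, and let f : Set(E) → ℝ be any function with f(∅) = 1, f(E) = 0, and f monotone decreasing for inclusion taking values in {0,1} (an 'up-closed failure indicator': f(A)=1 iff A lacks some property, where the property is monotone). Then the time T at which the increasing process of edges sorted by t first reaches a set A with f(A)=0 satisfies T = Σ_{B ⊆ E} (Σ_{A ⊇ B, f(A)=1} (-1)^{|A−B|}) · min{t(e) : e ∉ B}, where the inner minimum over an empty set is taken as 0 (the term for B = E has zero coefficient). -/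
/-!
A layer-cake argument. Write `X s = {e | t e ≤ s}` and `m B = min {t e | e ∉ B}`. Then
`s < m B ↔ X s ⊆ B`, and the first time `T` at which `P` holds satisfies `s < T ↔ ¬ P (X s)`.
The coefficients `c B` are the Möbius transform of the failure indicator `f` on the Boolean
lattice, so `∑_{B ⊇ C} c B = f C`; taking `C = X s` gives `∑_B c B · 1[s < m B] = 1[s < T]` for
every `s`. Integrating over `s > a`, for `a` below all the values involved, and using
`∑_B c B = f ∅ = 1` yields `T - a = ∑_B c B (m B - a)`.
-/

open Finset MeasureTheory

section Moebius

variable {α R : Type*} [DecidableEq α] [CommRing R]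

theorem sum_Icc_neg_one_pow_card_sub (C A : Finset α) :
    ∑ B ∈ Icc C A, (-1 : R) ^ (#A - #B) = if C = A then 1 else 0 := by
  by_cases hCA : C ⊆ A
  · have hsum : ∑ B ∈ Icc C A, (-1 : R) ^ (#A - #B) = ∑ S ∈ (A \ C).powerset, (-1 : R) ^ #S := by
      refine sum_nbij' (A \ ·) (A \ ·) ?_ ?_ ?_ ?_ ?_ <;> intro B hB <;>
        simp only [mem_Icc, mem_powerset] at hB ⊢
      · exact sdiff_subset_sdiff le_rfl hB.1
      · exact ⟨subset_sdiff.2 ⟨hCA, disjoint_sdiff.mono_right hB⟩, sdiff_subset⟩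
      · exact Finset.sdiff_sdiff_eq_self hB.2
      · exact Finset.sdiff_sdiff_eq_self (hB.trans sdiff_subset)
      · rw [card_sdiff_of_subset hB.2]
    have hint := congrArg (Int.cast : ℤ → R) (sum_powerset_neg_one_pow_card (x := A \ C))
    push_cast at hint
    rw [hsum, hint]
    exact if_congr (sdiff_eq_empty_iff_subset.trans ⟨subset_antisymm hCA, fun h => h ▸ le_rfl⟩)
      rfl rfl
  · rw [Icc_eq_empty (by simpa using hCA), sum_empty, if_neg (by rintro rfl; exact hCA le_rfl)]

variable [Fintype α]

theorem sum_superset_sum_superset_neg_one_pow (f : Finset α → R) (C : Finset α) :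
    ∑ B with C ⊆ B, ∑ A with B ⊆ A, (-1 : R) ^ (#A - #B) * f A = f C := by
  rw [sum_comm' (t' := univ.filter (C ⊆ ·)) (s' := fun A => Icc C A)
    (fun B A => by simp only [mem_filter, mem_univ, true_and, mem_Icc]; grind)]
  simp_rw [← sum_mul, sum_Icc_neg_one_pow_card_sub, ite_mul, one_mul, zero_mul]
  simp

end Moebius

section LayerCake

open Set

theorem integrableOn_Ioi_indicator_Iio_one (a x : ℝ) :
    IntegrableOn ((Iio x).indicator (1 : ℝ → ℝ)) (Ioi a) := by
  rw [IntegrableOn, integrable_indicator_iff measurableSet_Iio]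
  refine integrableOn_const ?_
  rw [Measure.restrict_apply measurableSet_Iio, Iio_inter_Ioi, Real.volume_Ioo]
  exact ENNReal.ofReal_ne_top

theorem setIntegral_Ioi_indicator_Iio_one {a x : ℝ} (h : a ≤ x) :
    ∫ s in Ioi a, (Iio x).indicator 1 s = x - a := by
  rw [integral_indicator_one measurableSet_Iio, measureReal_restrict_apply measurableSet_Iio,
    Iio_inter_Ioi, Real.volume_real_Ioo_of_le h]

theorem setIntegral_Ioi_sum_mul_indicator_Iio {ι : Type*} (I : Finset ι) (w x : ι → ℝ) {a : ℝ}
    (h : ∀ i ∈ I, a ≤ x i) :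
    ∫ s in Ioi a, ∑ i ∈ I, w i * (Iio (x i)).indicator 1 s = ∑ i ∈ I, w i * (x i - a) := by
  rw [integral_finsetSum _ fun i _ => (integrableOn_Ioi_indicator_Iio_one a (x i)).const_mul _]
  exact sum_congr rfl fun i hi => by
    rw [integral_const_mul, setIntegral_Ioi_indicator_Iio_one (h i hi)]

end LayerCake

section Threshold

variable {E : Type*} [Fintype E] {t : E → ℝ}

theorem lt_sInf_image_compl_iff_filter_le_subset {B : Finset E} (hB : ∃ e, e ∉ B) (s : ℝ) :
    s < sInf (t '' {e | e ∉ B}) ↔ univ.filter (fun e => t e ≤ s) ⊆ B := by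
  obtain ⟨e, he⟩ := hB
  rw [(Set.toFinite _).lt_csInf_iff ⟨t e, Set.mem_image_of_mem t he⟩]
  simp only [Set.forall_mem_image, Set.mem_ofPred_eq, subset_iff, mem_filter, mem_univ, true_and]
  exact forall_congr' fun x => by rw [← not_le]; tauto

theorem exists_filter_le_eq_filter_le {s : ℝ} (h : (univ.filter fun e => t e ≤ s).Nonempty) :
    ∃ e, t e ≤ s ∧ univ.filter (fun x => t x ≤ t e) = univ.filter (fun x => t x ≤ s) := by
  obtain ⟨e, he, hmax⟩ := exists_max_image _ t h
  rw [mem_filter] at he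
  refine ⟨e, he.2, ?_⟩
  ext x
  simp only [mem_filter, mem_univ, true_and]
  exact ⟨fun hx => hx.trans he.2, fun hx => hmax x (by simpa using hx)⟩

theorem filter_le_iff_sInf_le {P : Finset E → Prop} (hPuniv : P univ) (hPempty : ¬ P ∅)
    (hPmono : ∀ A A', A ⊆ A' → P A → P A') (s : ℝ) :
    P (univ.filter fun e => t e ≤ s) ↔
      sInf (Set.range t ∩ {s | P (univ.filter fun e => t e ≤ s)}) ≤ s := by
  set S := Set.range t ∩ {s | P (univ.filter fun e => t e ≤ s)}
  have hS : S.Finite := (Set.finite_range t).subset Set.inter_subset_left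
  have hreach : ∀ s, P (univ.filter fun e => t e ≤ s) → ∃ y ∈ S, y ≤ s := by
    intro s hs
    obtain ⟨e, hes, heq⟩ := exists_filter_le_eq_filter_le (nonempty_iff_ne_empty.2 fun h =>
      hPempty (h ▸ hs))
    exact ⟨t e, ⟨⟨e, rfl⟩, show P _ by rw [heq]; exact hs⟩, hes⟩
  constructor
  · intro hs
    obtain ⟨y, hy, hys⟩ := hreach s hs
    exact (csInf_le hS.bddBelow hy).trans hys
  · intro hTs
    obtain ⟨M, hM⟩ := (Set.finite_range t).bddAbove
    have hPM : P (univ.filter fun e => t e ≤ M) := by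
      convert hPuniv
      exact filter_true_of_mem fun e _ => hM ⟨e, rfl⟩
    obtain ⟨y, hy, -⟩ := hreach M hPM
    refine hPmono _ _ (fun e => ?_) (Set.Nonempty.csInf_mem ⟨y, hy⟩ hS).2
    simp only [mem_filter, mem_univ, true_and]
    exact fun he => he.trans hTs

theorem indicator_Iio_sInf_eq_ite {P : Finset E → Prop} [DecidablePred P] (hPuniv : P univ)
    (hPempty : ¬ P ∅) (hPmono : ∀ A A', A ⊆ A' → P A → P A') (s : ℝ) :
    (Set.Iio (sInf (Set.range t ∩ {s | P (univ.filter fun e => t e ≤ s)}))).indicator 1 s =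
      if P (univ.filter fun e => t e ≤ s) then (0 : ℝ) else 1 := by
  by_cases hs : P (univ.filter fun e => t e ≤ s)
  · simp [hs, (filter_le_iff_sInf_le hPuniv hPempty hPmono s).1 hs]
  · simp [hs, not_le.1 (mt (filter_le_iff_sInf_le hPuniv hPempty hPmono s).2 hs)]

end Threshold

section Coefficients

variable {E : Type*} [Fintype E] [DecidableEq E] (P : Finset E → Prop) [DecidablePred P]

def failureCoeff (B : Finset E) : ℝ :=
  ∑ A ∈ univ.powerset.filter (fun A => B ⊆ A ∧ ¬ P A), (-1 : ℝ) ^ (#A - #B)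

theorem failureCoeff_eq (B : Finset E) :
    failureCoeff P B = ∑ A with B ⊆ A, (-1 : ℝ) ^ (#A - #B) * if P A then 0 else 1 := by
  simp only [failureCoeff, ← filter_filter, sum_filter, mul_ite, mul_zero, mul_one, ite_not]
  rw [powerset_univ]

theorem sum_superset_failureCoeff (C : Finset E) :
    ∑ B with C ⊆ B, failureCoeff P B = if P C then 0 else 1 := by
  simp only [failureCoeff_eq]
  exact sum_superset_sum_superset_neg_one_pow _ C

theorem sum_failureCoeff (hPempty : ¬ P ∅) : ∑ B ∈ univ.powerset, failureCoeff P B = 1 := by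
  simpa [hPempty] using sum_superset_failureCoeff P ∅

variable {P}

theorem failureCoeff_univ (hPuniv : P univ) : failureCoeff P univ = 0 := by
  rw [failureCoeff_eq, sum_eq_zero]
  intro A hA
  rw [univ_subset_iff.1 (mem_filter.1 hA).2, if_pos hPuniv, mul_zero]

theorem sum_failureCoeff_mul_indicator_Iio_sInf (t : E → ℝ) (hPuniv : P univ) (s : ℝ) :
    ∑ B ∈ univ.powerset, failureCoeff P B * (Set.Iio (sInf (t '' {e | e ∉ B}))).indicator 1 s =
      if P (univ.filter fun e => t e ≤ s) then 0 else 1 := by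
  have hterm : ∀ B, failureCoeff P B * (Set.Iio (sInf (t '' {e | e ∉ B}))).indicator 1 s =
      if univ.filter (fun e => t e ≤ s) ⊆ B then failureCoeff P B else 0 := by
    intro B
    by_cases hB : B = univ
    -- here the minimum is the junk value `sInf ∅ = 0`, but the coefficient vanishes
    · simp [hB, failureCoeff_univ hPuniv]
    · have hB' : ∃ e, e ∉ B := by simpa [eq_univ_iff_forall] using hB
      simp only [Set.indicator, Set.mem_Iio, Pi.one_apply, mul_ite, mul_one, mul_zero,
        lt_sInf_image_compl_iff_filter_le_subset hB']
  rw [powerset_univ, sum_congr rfl fun B _ => hterm B, ← sum_filter, sum_superset_failureCoeff]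

end Coefficients

theorem stmt9_general {E : Type*} [Fintype E] [DecidableEq E]
    (t : E → ℝ)
    (P : Finset E → Prop) [DecidablePred P]
    (hPuniv : P Finset.univ) (hPempty : ¬ P (∅ : Finset E))
    (hPmono : ∀ A A' : Finset E, A ⊆ A' → P A → P A') :
    sInf (Set.range t ∩ {s : ℝ | P (Finset.univ.filter fun e => t e ≤ s)}) =
      ∑ B ∈ (Finset.univ : Finset E).powerset,
        (∑ A ∈ (Finset.univ : Finset E).powerset.filter
            (fun A => B ⊆ A ∧ ¬ P A), (-1 : ℝ) ^ (A.card - B.card)) *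
          sInf (t '' {e | e ∉ B}) := by
  set T := sInf (Set.range t ∩ {s : ℝ | P (Finset.univ.filter fun e => t e ≤ s)})
  change T = ∑ B ∈ univ.powerset, failureCoeff P B * sInf (t '' {e | e ∉ B})
  -- `a ≤ 0` because `sInf ∅ = 0` is the value of the minimum at `B = univ`
  obtain ⟨a, ha0, hat⟩ : ∃ a ≤ (0 : ℝ), ∀ e, a ≤ t e := by
    obtain ⟨b, hb⟩ := (Set.finite_range t).bddBelow
    exact ⟨min b 0, min_le_right _ _, fun e => (min_le_left _ _).trans (hb ⟨e, rfl⟩)⟩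
  have hTa : a ≤ T := Real.le_sInf (fun _ ⟨⟨e, he⟩, _⟩ => he ▸ hat e) ha0
  have hma : ∀ B : Finset E, a ≤ sInf (t '' {e | e ∉ B}) :=
    fun B => Real.le_sInf (fun _ ⟨e, _, he⟩ => he ▸ hat e) ha0
  calc T = (∫ s in Set.Ioi a, (Set.Iio T).indicator 1 s) + a := by
        rw [setIntegral_Ioi_indicator_Iio_one hTa, sub_add_cancel]
    _ = (∫ s in Set.Ioi a, ∑ B ∈ univ.powerset,
          failureCoeff P B * (Set.Iio (sInf (t '' {e | e ∉ B}))).indicator 1 s) + a := by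
        simp only [sum_failureCoeff_mul_indicator_Iio_sInf t hPuniv,
          indicator_Iio_sInf_eq_ite hPuniv hPempty hPmono, T]
    _ = ∑ B ∈ univ.powerset, failureCoeff P B * sInf (t '' {e | e ∉ B}) := by
        rw [setIntegral_Ioi_sum_mul_indicator_Iio _ _ _ fun B _ => hma B]
        simp only [mul_sub, sum_sub_distrib, ← sum_mul, sum_failureCoeff P hPempty, one_mul,
          sub_add_cancel]

theorem stmt9 {E : Type*} [Fintype E] [DecidableEq E] [Nonempty E]
    (t : E → ℝ) (ht : Function.Injective t) (htpos : ∀ e, 0 < t e)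
    (P : Finset E → Prop) [DecidablePred P]
    (hPuniv : P Finset.univ) (hPempty : ¬ P (∅ : Finset E))
    (hPmono : ∀ A A' : Finset E, A ⊆ A' → P A → P A') :
    sInf (Set.range t ∩ {s : ℝ | P (Finset.univ.filter fun e => t e ≤ s)}) =
      ∑ B ∈ (Finset.univ : Finset E).powerset,
        (∑ A ∈ (Finset.univ : Finset E).powerset.filter
            (fun A => B ⊆ A ∧ ¬ P A), (-1 : ℝ) ^ (A.card - B.card)) *
          sInf (t '' {e | e ∉ B}) :=
  stmt9_general t P hPuniv hPempty hPmono
end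

section
/- Let K_n be the complete graph on n vertices and let B ⊆ E_n be an edge set whose spanning subgraph (V_n, B) has exactly j components, each of which is a clique. Then the sum over supersets A with B ⊆ A ⊆ E_n of (-1)^{|A−B|} x^{κ(A)} equals the sum over all edge subsets A' of the complete graph K_j of (-1)^{|A'|} x^{κ(A')}, where κ denotes the number of connected components of the spanning subgraph. -/
open Finset

lemma sum_pns {α : Type*} [DecidableEq α] (P : Finset α) :
    ∑ m ∈ P.powerset, (-1:ℝ)^m.card = if P = ∅ then 1 else 0 := by
  have h := Finset.sum_powerset_neg_one_pow_card (x := P)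
  have h2 := congrArg (fun z : ℤ => (z : ℝ)) h
  push_cast at h2
  simpa using h2

lemma sign_fiber_sum {α β : Type*} [DecidableEq α] [DecidableEq β]
    (D : Finset α) (f : α → β) (T : Finset β)
    (hsurj : ∀ b ∈ T, ∃ a ∈ D, f a = b) :
    ∀ A' ∈ T.powerset, ∑ S ∈ D.powerset.filter (fun S => S.image f = A'), (-1 : ℝ)^S.card = (-1)^A'.card := by
  intro A'
  induction A' using Finset.strongInduction with
  | _ A' ih =>
    intro hA'T
    rw [Finset.mem_powerset] at hA'T
    have key : ∑ C ∈ A'.powerset, ∑ S ∈ D.powerset.filter (fun S => S.image f = C), (-1:ℝ)^S.card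
        = if A' = ∅ then 1 else 0 := by
      have h1 : ∑ C ∈ A'.powerset, ∑ S ∈ (D.powerset.filter (fun S => S.image f ⊆ A')).filter
          (fun S => S.image f = C), (-1:ℝ)^S.card
          = ∑ S ∈ D.powerset.filter (fun S => S.image f ⊆ A'), (-1:ℝ)^S.card := by
        apply Finset.sum_fiberwise_of_maps_to
        intro S hS
        simp only [Finset.mem_filter] at hS
        simpa using hS.2
      have h2 : ∀ C ∈ A'.powerset, (D.powerset.filter (fun S => S.image f ⊆ A')).filter
          (fun S => S.image f = C) = D.powerset.filter (fun S => S.image f = C) := by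
        intro C hC
        rw [Finset.mem_powerset] at hC
        rw [Finset.filter_filter]
        apply Finset.filter_congr
        intro S _
        constructor
        · rintro ⟨-, h⟩; exact h
        · rintro h; exact ⟨h ▸ hC, h⟩
      have h2' : ∑ C ∈ A'.powerset, ∑ S ∈ (D.powerset.filter (fun S => S.image f ⊆ A')).filter
          (fun S => S.image f = C), (-1:ℝ)^S.card
          = ∑ C ∈ A'.powerset, ∑ S ∈ D.powerset.filter (fun S => S.image f = C), (-1:ℝ)^S.card :=
        Finset.sum_congr rfl (fun C hC => Finset.sum_congr (h2 C hC) fun _ _ => rfl)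
      rw [← h2', h1]
      have h3 : D.powerset.filter (fun S => S.image f ⊆ A') = (D.filter (fun a => f a ∈ A')).powerset := by
        ext S
        rw [Finset.mem_powerset, Finset.mem_filter, Finset.mem_powerset, Finset.image_subset_iff]
        constructor
        · rintro ⟨hSD, him⟩ a ha
          exact Finset.mem_filter.2 ⟨hSD ha, him a ha⟩
        · intro h
          exact ⟨fun {a} ha => (Finset.mem_filter.1 (h ha)).1,
            fun a ha => (Finset.mem_filter.1 (h ha)).2⟩
      rw [h3, sum_pns]
      congr 1
      simp only [eq_iff_iff]
      constructor
      · intro h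
        by_contra hne
        obtain ⟨b, hb⟩ := Finset.nonempty_iff_ne_empty.2 hne
        obtain ⟨a, haD, hab⟩ := hsurj b (hA'T hb)
        have : a ∈ D.filter (fun a => f a ∈ A') := Finset.mem_filter.2 ⟨haD, hab ▸ hb⟩
        simp [h] at this
      · intro h
        rw [Finset.filter_eq_empty_iff]
        intro a _
        simp [h]
    have hsplit : ∑ C ∈ A'.powerset, (-1:ℝ)^C.card = if A' = ∅ then 1 else 0 := sum_pns A'
    have hzero : ∑ C ∈ A'.powerset, ((∑ S ∈ D.powerset.filter (fun S => S.image f = C), (-1:ℝ)^S.card) - (-1:ℝ)^C.card) = 0 := by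
      rw [Finset.sum_sub_distrib, key, hsplit, sub_self]
    have hothers : ∀ C ∈ A'.powerset, C ≠ A' →
        (∑ S ∈ D.powerset.filter (fun S => S.image f = C), (-1:ℝ)^S.card) - (-1:ℝ)^C.card = 0 := by
      intro C hC hne
      rw [Finset.mem_powerset] at hC
      rw [ih C (Finset.ssubset_iff_subset_ne.2 ⟨hC, hne⟩) (Finset.mem_powerset.2 (hC.trans hA'T)), sub_self]
    have hfin := Finset.sum_eq_single_of_mem A' (Finset.mem_powerset_self A')
      (fun C hC hne => hothers C hC hne)
    rw [hfin] at hzero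
    linarith

lemma card_cc_eq {V W : Type*} (G : SimpleGraph V) (H : SimpleGraph W) (g : V → W)
    (hsurj : Function.Surjective g)
    (fwd : ∀ u v, G.Adj u v → g u = g v ∨ H.Adj (g u) (g v))
    (bwd1 : ∀ u v, g u = g v → G.Reachable u v)
    (bwd2 : ∀ a b, H.Adj a b → ∃ p q, G.Adj p q ∧ g p = a ∧ g q = b) :
    Nat.card G.ConnectedComponent = Nat.card H.ConnectedComponent := by
  have rfwd : ∀ u v, G.Reachable u v → H.Reachable (g u) (g v) := by
    intro u v ⟨w⟩
    induction w with
    | nil => exact SimpleGraph.Reachable.refl _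
    | cons h p ih =>
      rcases fwd _ _ h with he | ha
      · rw [he]; exact ih
      · exact (SimpleGraph.Adj.reachable ha).trans ih
  have rbwd : ∀ a b, H.Reachable a b → ∀ u v, g u = a → g v = b → G.Reachable u v := by
    intro a b ⟨w⟩
    induction w with
    | nil => intro u v hu hv; exact bwd1 u v (hu.trans hv.symm)
    | cons h p ih =>
      intro u v hu hv
      obtain ⟨p', q', hadj, hp', hq'⟩ := bwd2 _ _ h
      exact ((bwd1 u p' (hu.trans hp'.symm)).trans hadj.reachable).trans (ih q' v hq' hv)
  have φcond : ∀ (u v : V) (p : G.Walk u v), p.IsPath →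
      H.connectedComponentMk (g u) = H.connectedComponentMk (g v) :=
    fun u v p _ => SimpleGraph.ConnectedComponent.eq.2 (rfwd u v ⟨p⟩)
  set s := Function.surjInv hsurj with hs
  have hgs : ∀ a, g (s a) = a := Function.surjInv_eq hsurj
  have ψcond : ∀ (a b : W) (p : H.Walk a b), p.IsPath →
      G.connectedComponentMk (s a) = G.connectedComponentMk (s b) :=
    fun a b p _ => SimpleGraph.ConnectedComponent.eq.2 (rbwd a b ⟨p⟩ _ _ (hgs a) (hgs b))
  refine Nat.card_congr ⟨SimpleGraph.ConnectedComponent.lift (fun v => H.connectedComponentMk (g v)) φcond,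
    SimpleGraph.ConnectedComponent.lift (fun a => G.connectedComponentMk (s a)) ψcond, ?_, ?_⟩
  · intro c
    refine SimpleGraph.ConnectedComponent.ind (fun v => ?_) c
    simp only [SimpleGraph.ConnectedComponent.lift_mk]
    exact SimpleGraph.ConnectedComponent.eq.2 (bwd1 _ _ (hgs (g v)))
  · intro c
    refine SimpleGraph.ConnectedComponent.ind (fun a => ?_) c
    simp only [SimpleGraph.ConnectedComponent.lift_mk]
    rw [hgs]

theorem stmt10 (n j : ℕ) (B : Finset (Sym2 (Fin n)))
    (hB : B ⊆ (⊤ : SimpleGraph (Fin n)).edgeFinset)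
    (hcomp : kappa B = j)
    (hclique : ∀ u v : Fin n, u ≠ v →
      (SimpleGraph.fromEdgeSet (B : Set (Sym2 (Fin n)))).Reachable u v →
      (SimpleGraph.fromEdgeSet (B : Set (Sym2 (Fin n)))).Adj u v)
    (x : ℝ) :
    ∑ A ∈ ((⊤ : SimpleGraph (Fin n)).edgeFinset).powerset.filter
        (fun A => B ⊆ A),
      (-1 : ℝ) ^ (A.card - B.card) * x ^ kappa A =
    ∑ A' ∈ ((⊤ : SimpleGraph (Fin j)).edgeFinset).powerset,
      (-1 : ℝ) ^ A'.card * x ^ kappa A' := by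
  classical
  set GB := SimpleGraph.fromEdgeSet (B : Set (Sym2 (Fin n))) with hGB
  let e : GB.ConnectedComponent ≃ Fin j := Finite.equivFinOfCardEq hcomp
  set g : Fin n → Fin j := fun v => e (GB.connectedComponentMk v) with hg
  set f : Sym2 (Fin n) → Sym2 (Fin j) := Sym2.map g with hf
  set D : Finset (Sym2 (Fin n)) := (⊤ : SimpleGraph (Fin n)).edgeFinset \ B with hD
  -- basic facts about g
  have hgiff : ∀ u v : Fin n, g u = g v ↔ GB.Reachable u v := by
    intro u v
    rw [hg]
    simp only [EmbeddingLike.apply_eq_iff_eq]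
    exact SimpleGraph.ConnectedComponent.eq
  have hgsurj : Function.Surjective g := by
    intro a
    obtain ⟨v, hv⟩ := (e.symm a).exists_rep
    refine ⟨v, ?_⟩
    have hv' : GB.connectedComponentMk v = e.symm a := hv
    show e (GB.connectedComponentMk v) = a
    rw [hv']
    exact e.apply_symm_apply a
  have hinB : ∀ u v : Fin n, s(u,v) ∈ B → g u = g v := by
    intro u v huv
    have hne : u ≠ v := by
      have := hB huv
      rw [SimpleGraph.mem_edgeFinset, SimpleGraph.mem_edgeSet, SimpleGraph.top_adj] at this
      exact this
    have hadj : GB.Adj u v := by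
      rw [hGB, SimpleGraph.fromEdgeSet_adj]
      exact ⟨huv, hne⟩
    exact (hgiff u v).2 hadj.reachable
  have hnotB : ∀ u v : Fin n, u ≠ v → s(u,v) ∉ B → g u ≠ g v := by
    intro u v hne hnB hgeq
    exact hnB ((hclique u v hne ((hgiff u v).1 hgeq)).1)
  -- kappa correspondence
  have hkappa : ∀ S : Finset (Sym2 (Fin n)), S ⊆ D → kappa (B ∪ S) = kappa (S.image f) := by
    intro S hSD
    have hSE : ∀ {p q : Fin n}, s(p,q) ∈ S → p ≠ q ∧ s(p,q) ∉ B := by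
      intro p q hpq
      have := hSD hpq
      rw [hD, Finset.mem_sdiff, SimpleGraph.mem_edgeFinset, SimpleGraph.mem_edgeSet,
        SimpleGraph.top_adj] at this
      exact this
    apply card_cc_eq _ _ g hgsurj
    · intro u v huv
      rw [SimpleGraph.fromEdgeSet_adj] at huv
      obtain ⟨hmem, hne⟩ := huv
      rw [Finset.coe_union, Set.mem_union] at hmem
      rcases hmem with hmem | hmem
      · exact Or.inl (hinB u v hmem)
      · refine Or.inr ?_
        rw [SimpleGraph.fromEdgeSet_adj]
        refine ⟨?_, hnotB u v hne (hSE hmem).2⟩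
        have : f s(u,v) = s(g u, g v) := Sym2.map_pair_eq g u v
        rw [← this]
        exact_mod_cast Finset.mem_image_of_mem f hmem
    · intro u v hgeq
      have hreach : GB.Reachable u v := (hgiff u v).1 hgeq
      refine hreach.mono (SimpleGraph.fromEdgeSet_mono ?_)
      rw [Finset.coe_union]
      exact Set.subset_union_left
    · intro a b hab
      rw [SimpleGraph.fromEdgeSet_adj] at hab
      obtain ⟨hmem, hne⟩ := hab
      have hmem' : s(a,b) ∈ S.image f := by exact_mod_cast hmem
      rw [Finset.mem_image] at hmem'
      obtain ⟨ed, hedS, hed⟩ := hmem'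
      induction ed using Sym2.ind with
      | _ p q =>
        rw [hf, Sym2.map_pair_eq, Sym2.eq_iff] at hed
        have hadj : (SimpleGraph.fromEdgeSet ((B ∪ S : Finset (Sym2 (Fin n))) : Set (Sym2 (Fin n)))).Adj p q := by
          rw [SimpleGraph.fromEdgeSet_adj]
          refine ⟨?_, (hSE hedS).1⟩
          rw [Finset.coe_union, Set.mem_union]
          exact Or.inr hedS
        rcases hed with ⟨h1, h2⟩ | ⟨h1, h2⟩
        · exact ⟨p, q, hadj, h1, h2⟩
        · exact ⟨q, p, hadj.symm, h2, h1⟩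
  -- f maps D into the edges of K_j
  have hmapsD : ∀ ed ∈ D, f ed ∈ (⊤ : SimpleGraph (Fin j)).edgeFinset := by
    intro ed hed
    induction ed using Sym2.ind with
    | _ p q =>
      rw [hD, Finset.mem_sdiff, SimpleGraph.mem_edgeFinset, SimpleGraph.mem_edgeSet,
        SimpleGraph.top_adj] at hed
      rw [hf, Sym2.map_pair_eq, SimpleGraph.mem_edgeFinset, SimpleGraph.mem_edgeSet,
        SimpleGraph.top_adj]
      exact hnotB p q hed.1 hed.2
  -- f is surjective from D onto edges of K_j
  have hsurjD : ∀ b ∈ (⊤ : SimpleGraph (Fin j)).edgeFinset, ∃ a ∈ D, f a = b := by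
    intro b hb
    induction b using Sym2.ind with
    | _ a c =>
      rw [SimpleGraph.mem_edgeFinset, SimpleGraph.mem_edgeSet, SimpleGraph.top_adj] at hb
      obtain ⟨u, hu⟩ := hgsurj a
      obtain ⟨v, hv⟩ := hgsurj c
      have hne : u ≠ v := fun h => hb (by rw [← hu, ← hv, h])
      have hnB : s(u,v) ∉ B := fun h => hb (by rw [← hu, ← hv, hinB u v h])
      refine ⟨s(u,v), ?_, ?_⟩
      · rw [hD, Finset.mem_sdiff, SimpleGraph.mem_edgeFinset, SimpleGraph.mem_edgeSet,
          SimpleGraph.top_adj]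
        exact ⟨hne, hnB⟩
      · rw [hf, Sym2.map_pair_eq, hu, hv]
  -- Step 1: reindex the LHS over S ⊆ D
  have step1 : ∑ A ∈ ((⊤ : SimpleGraph (Fin n)).edgeFinset).powerset.filter (fun A => B ⊆ A),
      (-1 : ℝ) ^ (A.card - B.card) * x ^ kappa A
      = ∑ S ∈ D.powerset, (-1 : ℝ) ^ S.card * x ^ kappa (B ∪ S) := by
    refine Finset.sum_bij' (fun A _ => A \ B) (fun S _ => B ∪ S) ?_ ?_ ?_ ?_ ?_
    · intro A hA
      rw [Finset.mem_filter, Finset.mem_powerset] at hA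
      rw [Finset.mem_powerset, hD]
      exact Finset.sdiff_subset_sdiff hA.1 (le_refl B)
    · intro S hS
      rw [Finset.mem_powerset] at hS
      rw [Finset.mem_filter, Finset.mem_powerset]
      refine ⟨Finset.union_subset hB (hS.trans Finset.sdiff_subset), Finset.subset_union_left⟩
    · intro A hA
      rw [Finset.mem_filter] at hA
      exact Finset.union_sdiff_of_subset hA.2
    · intro S hS
      rw [Finset.mem_powerset] at hS
      apply Finset.union_sdiff_cancel_left
      exact Finset.disjoint_left.2 fun a haB haS => (Finset.mem_sdiff.1 (hS haS)).2 haB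
    · intro A hA
      rw [Finset.mem_filter] at hA
      rw [Finset.card_sdiff_of_subset hA.2, Finset.union_sdiff_of_subset hA.2]
  rw [step1]
  -- Step 2: replace kappa (B ∪ S) with kappa (S.image f)
  have step2 : ∑ S ∈ D.powerset, (-1 : ℝ) ^ S.card * x ^ kappa (B ∪ S)
      = ∑ S ∈ D.powerset, (-1 : ℝ) ^ S.card * x ^ kappa (S.image f) := by
    refine Finset.sum_congr rfl fun S hS => ?_
    rw [hkappa S (Finset.mem_powerset.1 hS)]
  rw [step2]
  -- Step 3: fiberwise grouping by the image
  have hmaps : ∀ S ∈ D.powerset, S.image f ∈ ((⊤ : SimpleGraph (Fin j)).edgeFinset).powerset := by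
    intro S hS
    rw [Finset.mem_powerset] at hS ⊢
    exact fun b hb => by
      obtain ⟨a, ha, rfl⟩ := Finset.mem_image.1 hb
      exact hmapsD a (hS ha)
  rw [← Finset.sum_fiberwise_of_maps_to hmaps (fun S => (-1 : ℝ) ^ S.card * x ^ kappa (S.image f))]
  refine Finset.sum_congr rfl fun A' hA' => ?_
  have hinner : ∑ S ∈ D.powerset.filter (fun S => S.image f = A'),
      (-1 : ℝ) ^ S.card * x ^ kappa (S.image f)
      = ∑ S ∈ D.powerset.filter (fun S => S.image f = A'), (-1 : ℝ) ^ S.card * x ^ kappa A' := by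
    refine Finset.sum_congr rfl fun S hS => ?_
    rw [(Finset.mem_filter.1 hS).2]
  rw [hinner, ← Finset.sum_mul, sign_fiber_sum D f _ hsurjD A' hA']
end

section
/- Let B ⊆ E_n be an edge set of the complete graph K_n such that some connected component of (V_n, B) is not a clique, i.e., there is an edge e ∈ E_n ∖ B joining two vertices in the same component of (V_n, B). Then for every k, Σ_{A : B ⊆ A ⊆ E_n, κ(A) > k} (-1)^{|A−B|} = 0. -/
open Finset

lemma reachable_insert_iff {n : ℕ} (A : Finset (Sym2 (Fin n))) (u v : Fin n)
    (hre : (SimpleGraph.fromEdgeSet (A : Set (Sym2 (Fin n)))).Reachable u v)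
    (x y : Fin n) :
    (SimpleGraph.fromEdgeSet ((insert s(u,v) A : Finset (Sym2 (Fin n))) : Set (Sym2 (Fin n)))).Reachable x y ↔
      (SimpleGraph.fromEdgeSet (A : Set (Sym2 (Fin n)))).Reachable x y := by
  classical
  constructor
  · rintro ⟨w⟩
    induction w with
    | nil => exact SimpleGraph.Reachable.refl _
    | @cons a b c h p ih =>
      refine SimpleGraph.Reachable.trans ?_ ih
      obtain ⟨hmem, hne⟩ := h
      have hmem' : s(a, b) ∈ (insert s(u,v) (A : Set (Sym2 (Fin n))) : Set (Sym2 (Fin n))) := by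
        simpa [Finset.coe_insert] using hmem
      rcases Set.mem_insert_iff.1 hmem' with h1 | h2
      · rw [Sym2.eq_iff] at h1
        rcases h1 with ⟨rfl, rfl⟩ | ⟨rfl, rfl⟩
        · exact hre
        · exact hre.symm
      · exact SimpleGraph.Adj.reachable ⟨h2, hne⟩
  · exact fun h => h.mono (SimpleGraph.fromEdgeSet_mono (by
      simp only [Finset.coe_insert]; exact Set.subset_insert _ _))

lemma kappa_insert_eq {n : ℕ} (A : Finset (Sym2 (Fin n))) (u v : Fin n)
    (hre : (SimpleGraph.fromEdgeSet (A : Set (Sym2 (Fin n)))).Reachable u v) :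
    kappa (insert s(u,v) A) = kappa A := by
  unfold kappa
  have h : (SimpleGraph.fromEdgeSet ((insert s(u,v) A : Finset (Sym2 (Fin n))) : Set (Sym2 (Fin n)))).Reachable =
      (SimpleGraph.fromEdgeSet (A : Set (Sym2 (Fin n)))).Reachable := by
    funext x y
    exact propext (reachable_insert_iff A u v hre x y)
  show Nat.card (Quot _) = Nat.card (Quot _)
  rw [h]

theorem stmt11 (n : ℕ) (B : Finset (Sym2 (Fin n)))
    (hB : B ⊆ (⊤ : SimpleGraph (Fin n)).edgeFinset)
    (hnotclique : ∃ u v : Fin n, u ≠ v ∧ s(u, v) ∉ B ∧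
      (SimpleGraph.fromEdgeSet (B : Set (Sym2 (Fin n)))).Reachable u v)
    (k : ℕ) :
    ∑ A ∈ ((⊤ : SimpleGraph (Fin n)).edgeFinset).powerset.filter
        (fun A => B ⊆ A ∧ k < kappa A),
      (-1 : ℤ) ^ (A.card - B.card) = 0 := by
  classical
  obtain ⟨u, v, huv, heB, hre⟩ := hnotclique
  set e : Sym2 (Fin n) := s(u, v) with he
  have heTop : e ∈ (⊤ : SimpleGraph (Fin n)).edgeFinset := by
    simp [SimpleGraph.mem_edgeFinset, he]
    exact huv
  refine Finset.sum_involution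
    (fun A _ => if e ∈ A then A.erase e else insert e A) ?_ ?_ ?_ ?_
  · -- sum of pairs is zero
    intro A hA
    simp only [Finset.mem_filter, Finset.mem_powerset] at hA
    obtain ⟨hAtop, hBA, hk⟩ := hA
    by_cases heA : e ∈ A
    · simp only [heA, if_true]
      have hBA' : B ⊆ A.erase e := fun x hx =>
        Finset.mem_erase.2 ⟨fun hxe => heB (hxe ▸ hx), hBA hx⟩
      have hcard : (A.erase e).card = A.card - 1 := Finset.card_erase_of_mem heA
      have hle : B.card + 1 ≤ A.card := by
        have h2 := Finset.card_le_card hBA'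
        have h3 : 0 < A.card := Finset.card_pos.2 ⟨e, heA⟩
        omega
      have h1 : A.card - B.card = ((A.erase e).card - B.card) + 1 := by omega
      rw [h1, pow_succ]
      ring
    · simp only [heA, if_false]
      have hcard : (insert e A).card = A.card + 1 := Finset.card_insert_of_notMem heA
      have hle : B.card ≤ A.card := Finset.card_le_card hBA
      have h1 : (insert e A).card - B.card = (A.card - B.card) + 1 := by omega
      rw [h1, pow_succ]
      ring
  · intro A hA _
    by_cases heA : e ∈ A
    · simp only [heA, if_true]
      exact fun h => (Finset.notMem_erase e A) (h.symm ▸ heA)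
    · simp only [heA, if_false]
      exact fun h => heA (h ▸ Finset.mem_insert_self e A)
  · -- maps into the set
    intro A hA
    simp only [Finset.mem_filter, Finset.mem_powerset] at hA ⊢
    obtain ⟨hAtop, hBA, hk⟩ := hA
    by_cases heA : e ∈ A
    · simp only [heA, if_true]
      have hBA' : B ⊆ A.erase e := fun x hx =>
        Finset.mem_erase.2 ⟨fun hxe => heB (hxe ▸ hx), hBA hx⟩
      have hre' : (SimpleGraph.fromEdgeSet ((A.erase e : Finset (Sym2 (Fin n))) : Set (Sym2 (Fin n)))).Reachable u v :=
        hre.mono (SimpleGraph.fromEdgeSet_mono (Finset.coe_subset.2 hBA'))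
      have hkap : kappa A = kappa (A.erase e) := by
        conv_lhs => rw [← Finset.insert_erase heA]
        exact kappa_insert_eq (A.erase e) u v hre'
      exact ⟨(Finset.erase_subset e A).trans hAtop, hBA', hkap ▸ hk⟩
    · simp only [heA, if_false]
      have hre' : (SimpleGraph.fromEdgeSet ((A : Finset (Sym2 (Fin n))) : Set (Sym2 (Fin n)))).Reachable u v :=
        hre.mono (SimpleGraph.fromEdgeSet_mono (Finset.coe_subset.2 hBA))
      have hkap : kappa (insert e A) = kappa A := kappa_insert_eq A u v hre'
      exact ⟨Finset.insert_subset heTop hAtop, hBA.trans (Finset.subset_insert e A),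
        hkap ▸ hk⟩
  · -- involutive
    intro A hA
    by_cases heA : e ∈ A
    · simp [heA, Finset.insert_erase heA]
    · simp [heA, Finset.erase_insert heA]
end
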